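/- Let V be a finite set, let E ⊆ V × V be a set of directed edges, and let s ≠ t be vertices of V. Let f : V × V → ℕ satisfy: f(u, v) = 0 whenever (u, v) ∉ E; f(u, v) ≤ 1 for all u, v (unit capacities); and flow conservation Σ_{u ∈ V} f(u, v) = Σ_{w ∈ V} f(v, w) at every vertex v ∉ {s, t}. Let k = Σ_{v ∈ V} f(s, v) − Σ_{v ∈ V} f(v, s), and suppose k ≥ 0. Then there exist k pairwise edge-disjoint directed paths from s to t in (V, E), each of which uses only edges (u, v) with f(u, v) = 1. -/

import Mathlib

/-! Induction on the value `k`. When `k > 0`, the set of vertices reachable from `s` along edges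
of positive flow must contain `t`: otherwise no flow leaves it, whereas the net flow out of any set
containing `s` but not `t` is `k`. Shortcutting loops gives a simple `s`-`t` path `p`; subtracting
the edge indicator of `p` (which is at most `f`, as `p` is simple) leaves a flow of value `k - 1`.
Each edge `e` then lies on at most `f e ≤ 1` of the resulting paths. -/

/-- A directed path in the graph with edge set `E`: a nonempty list of vertices
whose consecutive pairs are edges. -/
def IsPath {V : Type*} (E : Set (V × V)) (p : List V) : Prop :=
  p ≠ [] ∧ List.Chain' (fun u w => (u, w) ∈ E) p

/-- The edges of a path, i.e. the consecutive pairs of vertices. -/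
def pathEdges {V : Type*} (p : List V) : List (V × V) :=
  p.zip p.tail

/-- A directed path from `s` to `t`. -/
def IsPathFromTo {V : Type*} (E : Set (V × V)) (p : List V) (s t : V) : Prop :=
  IsPath E p ∧ p.head? = some s ∧ p.getLast? = some t

/-- Two paths are edge-disjoint: no pair of consecutive vertices occurs as an edge
of both. -/
def EdgeDisjoint {V : Type*} (p q : List V) : Prop :=
  ∀ e : V × V, e ∈ pathEdges p → e ∉ pathEdges q

open Finset Relation

section PathEdges

variable {V : Type*}

lemma pathEdges_cons_cons (a b : V) (l : List V) :
    pathEdges (a :: b :: l) = (a, b) :: pathEdges (b :: l) := rfl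

lemma map_fst_pathEdges : ∀ p : List V, (pathEdges p).map Prod.fst = p.dropLast
  | [] | [_] => rfl
  | a :: b :: l => by
    rw [pathEdges_cons_cons, List.map_cons, map_fst_pathEdges (b :: l)]
    rfl

lemma map_snd_pathEdges (p : List V) : (pathEdges p).map Prod.snd = p.tail :=
  List.map_snd_zip (by simp)

lemma isChain_iff_forall_mem_pathEdges {r : V → V → Prop} :
    ∀ {p : List V}, p.IsChain r ↔ ∀ e ∈ pathEdges p, r e.1 e.2
  | [] | [_] => by simp [pathEdges]
  | a :: b :: l => by
    rw [List.isChain_cons_cons, isChain_iff_forall_mem_pathEdges, pathEdges_cons_cons,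
      List.forall_mem_cons]

lemma List.Nodup.pathEdges {p : List V} (h : p.Nodup) : (pathEdges p).Nodup :=
  .of_map Prod.snd <| by rw [map_snd_pathEdges]; exact h.sublist p.tail_sublist

lemma count_pathEdges_le [DecidableEq V] {f : V × V → ℕ} {p : List V} (hnd : p.Nodup)
    (hp : p.IsChain fun u w => 0 < f (u, w)) (e : V × V) : (pathEdges p).count e ≤ f e := by
  rw [hnd.pathEdges.count]
  split_ifs with he
  · exact isChain_iff_forall_mem_pathEdges.1 hp e he
  · exact Nat.zero_le _

end PathEdges

section Count

variable {α β : Type*} [DecidableEq α] [DecidableEq β]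

lemma sum_count_mk_eq_count_map_fst [Fintype β] (L : List (α × β)) (a : α) :
    ∑ b, L.count (a, b) = (L.map Prod.fst).count a := by
  induction L with
  | nil => simp
  | cons e L ih => simp [List.count_cons, sum_add_distrib, ih, Prod.ext_iff, ite_and]

lemma sum_count_mk_eq_count_map_snd [Fintype α] (L : List (α × β)) (b : β) :
    ∑ a, L.count (a, b) = (L.map Prod.snd).count b := by
  induction L with
  | nil => simp
  | cons e L ih => simp [List.count_cons, sum_add_distrib, ih, Prod.ext_iff, ite_and]

end Count

lemma exists_nodup_isChain_of_relationReflTransGen {α : Type*} {r : α → α → Prop} {a b : α}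
    (h : ReflTransGen r a b) :
    ∃ l : List α, l.Nodup ∧ l.IsChain r ∧ l.head? = some a ∧ l.getLast? = some b := by
  induction h using ReflTransGen.head_induction_on with
  | refl => exact ⟨[b], List.nodup_singleton b, List.isChain_singleton b, rfl, rfl⟩
  | @head a c hac _ ih =>
    obtain ⟨l, hnd, hch, hc, hb⟩ := ih
    by_cases ha : a ∈ l
    · obtain ⟨l₁, l₂, rfl⟩ := List.append_of_mem ha
      have hsuf := List.suffix_append l₁ (a :: l₂)
      refine ⟨a :: l₂, hnd.sublist hsuf.sublist, hch.suffix hsuf, rfl, ?_⟩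
      rw [← hb, List.getLast?_append]
      simp [List.getLast?_cons]
    · obtain ⟨l, rfl⟩ := List.head?_eq_some_iff.1 hc
      exact ⟨a :: c :: l, List.nodup_cons.2 ⟨ha, hnd⟩, List.isChain_cons_cons.2 ⟨hac, hch⟩,
        rfl, by rwa [List.getLast?_cons_cons]⟩

section Flow

variable {V : Type*} [Fintype V]

structure IsFlow (f : V × V → ℕ) (s t : V) (k : ℕ) : Prop where
  conservation : ∀ x, x ≠ s → x ≠ t → ∑ u, f (u, x) = ∑ w, f (x, w)
  value : ∑ x, f (s, x) = ∑ x, f (x, s) + k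

namespace IsFlow

variable {f g : V × V → ℕ} {s t : V} {k : ℕ}

lemma of_add {a b : ℕ} (h : IsFlow (f + g) s t (a + b)) (hg : IsFlow g s t b) :
    IsFlow f s t a := by
  refine ⟨fun x hs ht => ?_, ?_⟩
  · have := h.conservation x hs ht
    have := hg.conservation x hs ht
    simp only [Pi.add_apply, sum_add_distrib] at *
    omega
  · have := h.value
    have := hg.value
    simp only [Pi.add_apply, sum_add_distrib] at *
    omega

lemma sum_outflow_eq [DecidableEq V] (hf : IsFlow f s t k) {R : Finset V} (hs : s ∈ R)
    (ht : t ∉ R) : ∑ x ∈ R, ∑ w, f (x, w) = ∑ x ∈ R, ∑ u, f (u, x) + k := by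
  have hcons : ∀ x ∈ R.erase s, ∑ w, f (x, w) = ∑ u, f (u, x) := fun x hx =>
    (hf.conservation x (ne_of_mem_erase hx) (ne_of_mem_of_not_mem (mem_of_mem_erase hx) ht)).symm
  rw [← add_sum_erase R _ hs, ← add_sum_erase R _ hs, sum_congr rfl hcons, hf.value]
  ring

lemma value_eq_zero_of_closed [DecidableEq V] (hf : IsFlow f s t k) {R : Finset V}
    (hs : s ∈ R) (ht : t ∉ R) (hR : ∀ x ∈ R, ∀ w ∉ R, f (x, w) = 0) : k = 0 := by
  have hout : ∑ x ∈ R, ∑ w, f (x, w) = ∑ x ∈ R, ∑ w ∈ R, f (x, w) :=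
    sum_congr rfl fun x hx =>
      (sum_subset (subset_univ R) fun w _ hw => hR x hx w hw).symm
  have hin : ∑ x ∈ R, ∑ w ∈ R, f (x, w) ≤ ∑ x ∈ R, ∑ u, f (u, x) := by
    rw [sum_comm]
    exact sum_le_sum fun w _ => sum_le_sum_of_subset (subset_univ R)
  have := hf.sum_outflow_eq hs ht
  omega

lemma reflTransGen (hf : IsFlow f s t k) (hk : k ≠ 0) :
    ReflTransGen (fun u w => 0 < f (u, w)) s t := by
  classical
  by_contra hst
  let R := univ.filter (ReflTransGen (fun u w => 0 < f (u, w)) s)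
  refine hk (hf.value_eq_zero_of_closed (R := R) (by simp [R, ReflTransGen.refl])
    (by simpa [R] using hst) fun x hx w hw => ?_)
  by_contra hxw
  exact hw (by simpa [R] using (mem_filter.1 hx).2.tail (Nat.pos_of_ne_zero hxw))

end IsFlow

lemma isFlow_count_pathEdges [DecidableEq V] {p : List V} {s t : V} (hst : s ≠ t)
    (hs : p.head? = some s) (ht : p.getLast? = some t) :
    IsFlow (fun e => (pathEdges p).count e) s t 1 := by
  have hin x : ∑ u, (pathEdges p).count (u, x) = p.tail.count x := by
    rw [sum_count_mk_eq_count_map_snd, map_snd_pathEdges]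
  have hout x : ∑ w, (pathEdges p).count (x, w) = p.dropLast.count x := by
    rw [sum_count_mk_eq_count_map_fst, map_fst_pathEdges]
  have hcount x : p.dropLast.count x + (if t = x then 1 else 0)
      = p.tail.count x + (if s = x then 1 else 0) := by
    have hhead : p.count x = p.tail.count x + (if s = x then 1 else 0) := by
      obtain ⟨l, rfl⟩ := List.head?_eq_some_iff.1 hs
      simp [List.count_cons]
    have hlast : p.count x = p.dropLast.count x + (if t = x then 1 else 0) := by
      conv_lhs => rw [← List.dropLast_append_getLast? t ht]
      simp [List.count_append, List.count_singleton]
    rw [← hhead, ← hlast]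
  refine ⟨fun x hxs hxt => ?_, ?_⟩
  · have := hcount x
    simp only [Ne.symm hxs, Ne.symm hxt, if_false] at this
    rw [hin, hout]
    omega
  · have := hcount s
    simp only [hst.symm, if_false, if_true] at this
    rw [hin, hout]
    omega

theorem IsFlow.exists_path_decomposition [DecidableEq V] {s t : V} (hst : s ≠ t) :
    ∀ {k : ℕ} {f : V × V → ℕ}, IsFlow f s t k → ∃ P : Fin k → List V,
      (∀ m, (P m).head? = some s ∧ (P m).getLast? = some t) ∧
      ∀ e, ∑ m, (pathEdges (P m)).count e ≤ f e := by
  intro k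
  induction k with
  | zero => exact fun _ => ⟨Fin.elim0, fun m => m.elim0, by simp⟩
  | succ k ih =>
    intro f hf
    obtain ⟨p, hnd, hp, hs, ht⟩ :=
      exists_nodup_isChain_of_relationReflTransGen (hf.reflTransGen k.succ_ne_zero)
    let c : V × V → ℕ := fun e => (pathEdges p).count e
    have hc : c ≤ f := count_pathEdges_le hnd hp
    have hrest : IsFlow (f - c) s t k :=
      ((tsub_add_cancel_of_le hc).symm ▸ hf).of_add (isFlow_count_pathEdges hst hs ht)
    obtain ⟨Q, hQ, hQf⟩ := ih hrest
    refine ⟨Fin.cons p Q, Fin.cases ⟨hs, ht⟩ hQ, fun e => ?_⟩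
    rw [Fin.sum_univ_succ]
    simp only [Fin.cons_zero, Fin.cons_succ]
    exact (Nat.add_le_add_left (hQf e) (c e)).trans_eq (add_tsub_cancel_of_le (hc e))

end Flow

theorem flow_decomposition_general {V : Type*} [Fintype V]
    (E : Set (V × V)) (s t : V) (hst : s ≠ t) (f : V × V → ℕ)
    (hE : ∀ u w : V, (u, w) ∉ E → f (u, w) = 0)
    (hcap : ∀ u w : V, f (u, w) ≤ 1)
    (hcons : ∀ x : V, x ≠ s → x ≠ t → ∑ u, f (u, x) = ∑ w, f (x, w))
    (k : ℕ) (hval : ∑ x, f (s, x) = ∑ x, f (x, s) + k) :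
    ∃ P : Fin k → List V,
      (∀ m, IsPathFromTo E (P m) s t) ∧
      (∀ m m', m ≠ m' → EdgeDisjoint (P m) (P m')) ∧
      (∀ m, ∀ e ∈ pathEdges (P m), f e = 1) := by
  classical
  obtain ⟨P, hends, hcount⟩ := IsFlow.exists_path_decomposition hst ⟨hcons, hval⟩
  have hpos : ∀ m, ∀ e ∈ pathEdges (P m), 1 ≤ f e := fun m e he =>
    (Nat.succ_le_of_lt (List.count_pos_iff.2 he)).trans <|
      (single_le_sum (fun _ _ => Nat.zero_le _) (mem_univ m)).trans (hcount e)
  have hflow : ∀ m, ∀ e ∈ pathEdges (P m), f e = 1 := fun m e he =>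
    le_antisymm (hcap e.1 e.2) (hpos m e he)
  refine ⟨P, fun m => ⟨⟨?_, ?_⟩, hends m⟩, fun m m' hmm' ⟨u, w⟩ he he' => ?_, hflow⟩
  · exact List.ne_nil_of_mem (List.mem_of_mem_head? (hends m).1)
  · refine isChain_iff_forall_mem_pathEdges.2 fun ⟨u, w⟩ he => ?_
    by_contra hnot
    have := hE u w hnot
    have := hpos m _ he
    omega
  · have hpair := sum_pair (f := fun m => (pathEdges (P m)).count (u, w)) hmm'
    have := (sum_le_sum_of_subset (subset_univ {m, m'})).trans (hcount (u, w))
    have := List.count_pos_iff.2 he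
    have := List.count_pos_iff.2 he'
    have := hcap u w
    omega

/-- In a unit-capacity network, an integral flow `f` of value `k ≥ 0`
from `s` to `t` (zero off the edge set, bounded by `1`, conserved away from `s` and
`t`) can be decomposed into `k` pairwise edge-disjoint directed `s`-`t` paths, each
using only edges carrying flow `1`.  The value condition
`Σ_v f(s,v) − Σ_v f(v,s) = k ≥ 0` is expressed as `Σ_v f(s,v) = Σ_v f(v,s) + k`. -/
theorem flow_decomposition {V : Type*} [Fintype V] [DecidableEq V]
    (E : Set (V × V)) (s t : V) (hst : s ≠ t) (f : V × V → ℕ)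
    (hE : ∀ u w : V, (u, w) ∉ E → f (u, w) = 0)
    (hcap : ∀ u w : V, f (u, w) ≤ 1)
    (hcons : ∀ x : V, x ≠ s → x ≠ t → ∑ u, f (u, x) = ∑ w, f (x, w))
    (k : ℕ) (hval : ∑ x, f (s, x) = ∑ x, f (x, s) + k) :
    ∃ P : Fin k → List V,
      (∀ m, IsPathFromTo E (P m) s t) ∧
      (∀ m m', m ≠ m' → EdgeDisjoint (P m) (P m')) ∧
      (∀ m, ∀ e ∈ pathEdges (P m), f e = 1) :=
  flow_decomposition_general E s t hst f hE hcap hcons k hval
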